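/- Let G₀ be a 3-connected combinatorial graph and let G be a quantum graph with underlying combinatorial graph G₀ and length function L : E → ℝ_{>0}. If two length functions L and L' on G₀ assign the same length to every cycle of G₀, then L = L', i.e., the lengths of all cycles determine the length of every edge. -/

import Mathlib

/-- A finite multigraph: each edge is assigned an ordered pair of endpoints. -/
structure Multigraph (V E : Type) where
  ends : E → V × V

namespace Multigraph

variable {V E : Type} (G : Multigraph V E)

/-- `u` and `v` are joined by an edge in `S`. -/
def Adj (S : Set E) (u v : V) : Prop :=
  ∃ e ∈ S, G.ends e = (u, v) ∨ G.ends e = (v, u)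

/-- The graph is connected via the edges in `S`. -/
def ConnectedVia (S : Set E) : Prop :=
  ∀ u v : V, Relation.ReflTransGen (G.Adj S) u v

def Connected : Prop := G.ConnectedVia Set.univ

/-- Degree of a vertex: the number of edge-endpoints at `v` (a loop counts twice). -/
def degree [Fintype E] [DecidableEq V] (v : V) : ℕ :=
  ∑ e : E, ((if (G.ends e).1 = v then 1 else 0) + (if (G.ends e).2 = v then 1 else 0))

end Multigraph

namespace Multigraph

variable {V E : Type} (G : Multigraph V E)

/-- Number of edge-endpoints of edges of `C` at the vertex `v` (a loop counts twice). -/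
def edgeCount [DecidableEq V] (C : Finset E) (v : V) : ℕ :=
  ∑ e ∈ C, ((if (G.ends e).1 = v then 1 else 0) + (if (G.ends e).2 = v then 1 else 0))

/-- `v` is an endpoint of some edge of `C`. -/
def Incident (C : Finset E) (v : V) : Prop :=
  ∃ e ∈ C, (G.ends e).1 = v ∨ (G.ends e).2 = v

/-- `C` is the edge set of a cycle: it is nonempty, every vertex meets either `0` or
exactly `2` edge-endpoints of `C`, and `C` is connected. -/
def IsCycle [DecidableEq V] (C : Finset E) : Prop :=
  C.Nonempty ∧ (∀ v : V, G.edgeCount C v = 0 ∨ G.edgeCount C v = 2) ∧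
    ∀ u w : V, G.Incident C u → G.Incident C w →
      Relation.ReflTransGen (G.Adj (↑C : Set E)) u w

end Multigraph

namespace Multigraph

variable {V E : Type}

/-- `IsWalk G vs es` : `vs` is the list of visited vertices and `es` the list of
traversed edges of a walk in `G`. -/
def IsWalk (G : Multigraph V E) : List V → List E → Prop
  | [_], [] => True
  | u :: w :: vs, e :: es =>
      (G.ends e = (u, w) ∨ G.ends e = (w, u)) ∧ IsWalk G (w :: vs) es
  | _, _ => False

/-- A path from `u` to `v` with vertex list `vs` and edge list `es`:
a walk with no repeated vertices and no repeated edges. -/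
def IsPath (G : Multigraph V E) (u v : V) (vs : List V) (es : List E) : Prop :=
  G.IsWalk vs es ∧ vs.Nodup ∧ es.Nodup ∧ vs.head? = some u ∧ vs.getLast? = some v

/-- `G` is 3-connected: any two distinct vertices are joined by three pairwise
internally disjoint paths (sharing no edges and no vertices besides the endpoints). -/
def ThreeConnected (G : Multigraph V E) : Prop :=
  ∀ u v : V, u ≠ v →
    ∃ p : Fin 3 → List V × List E,
      (∀ i, G.IsPath u v (p i).1 (p i).2) ∧
      ∀ i j, i ≠ j →
        (∀ x ∈ (p i).1, x ∈ (p j).1 → x = u ∨ x = v) ∧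
        (∀ e ∈ (p i).2, e ∉ (p j).2)

end Multigraph

/-! A loop is a cycle by itself. An edge `e` joining distinct vertices `a` and `b` avoids at
least two, `P` and `Q`, of three internally disjoint `a`–`b` paths; then `e + P`, `e + Q` and
`P + Q` are cycles, and `2 L(e) = L(e + P) + L(e + Q) - L(P + Q)`. -/

theorem exists_ne_and_notMem_and_notMem {α : Type*} {p : Fin 3 → List α}
    (hp : ∀ i j, i ≠ j → ∀ e ∈ p i, e ∉ p j) (e : α) : ∃ i j, i ≠ j ∧ e ∉ p i ∧ e ∉ p j := by
  by_cases h₀ : e ∈ p 0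
  · exact ⟨1, 2, by decide, hp 0 1 (by decide) e h₀, hp 0 2 (by decide) e h₀⟩
  by_cases h₁ : e ∈ p 1
  · exact ⟨0, 2, by decide, h₀, hp 1 2 (by decide) e h₁⟩
  exact ⟨0, 1, by decide, h₀, h₁⟩

namespace Multigraph

variable {V E : Type} {G : Multigraph V E}

instance (S : Set E) : Std.Symm (G.Adj S) :=
  ⟨fun _ _ ⟨e, he, h⟩ => ⟨e, he, h.symm⟩⟩

theorem Adj.mono {S T : Set E} (hST : S ⊆ T) {u v : V} : G.Adj S u v → G.Adj T u v
  | ⟨e, he, h⟩ => ⟨e, hST he, h⟩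

theorem incident_insert [DecidableEq E] {C : Finset E} {e : E} {x : V} :
    G.Incident (insert e C) x ↔ (G.ends e).1 = x ∨ (G.ends e).2 = x ∨ G.Incident C x := by
  simp [Incident, or_assoc]

theorem incident_union [DecidableEq E] {C D : Finset E} {x : V} :
    G.Incident (C ∪ D) x ↔ G.Incident C x ∨ G.Incident D x := by
  simp only [Incident, Finset.mem_union, or_and_right, exists_or]

theorem IsWalk.ends_mem : ∀ {vs : List V} {es : List E}, G.IsWalk vs es →
    ∀ e ∈ es, (G.ends e).1 ∈ vs ∧ (G.ends e).2 ∈ vs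
  | [_], [], _, _, he => absurd he List.not_mem_nil
  | u :: w :: vs, e' :: es, ⟨he', hwalk⟩, e, he => by
    rcases List.mem_cons.1 he with rfl | he
    · rcases he' with h | h <;> simp [h]
    · exact (hwalk.ends_mem e he).imp (List.mem_cons_of_mem _) (List.mem_cons_of_mem _)

theorem IsWalk.reflTransGen_adj : ∀ {vs : List V} {es : List E}, G.IsWalk vs es →
    ∀ {u x : V}, vs.head? = some u → x ∈ vs → Relation.ReflTransGen (G.Adj {e | e ∈ es}) u x
  | [w], [], _, u, x, hu, hx => by
    simp only [List.head?_cons, Option.some.injEq, List.mem_singleton] at hu hx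
    subst hu hx
    exact .refl
  | u' :: w :: vs, e :: es, ⟨he, hwalk⟩, u, x, hu, hx => by
    simp only [List.head?_cons, Option.some.injEq] at hu
    subst hu
    rcases List.mem_cons.1 hx with rfl | hx
    · exact .refl
    · refine .head ⟨e, List.mem_cons_self, he⟩ ?_
      exact Relation.ReflTransGen.mono (fun _ _ => Adj.mono fun _ => List.mem_cons_of_mem _) _ _
        (hwalk.reflTransGen_adj rfl hx)

namespace IsPath

variable {u v : V} {vs : List V} {es : List E}

theorem head_mem (hp : G.IsPath u v vs es) : u ∈ vs :=
  List.mem_of_mem_head? hp.2.2.2.1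

theorem last_mem (hp : G.IsPath u v vs es) : v ∈ vs :=
  List.mem_of_mem_getLast? hp.2.2.2.2

theorem edges_ne_nil (hp : G.IsPath u v vs es) (huv : u ≠ v) : es ≠ [] := by
  rintro rfl
  obtain ⟨hwalk, -, -, hu, hv⟩ := hp
  match vs, hwalk with
  | [w], _ => simp_all

theorem mem_of_incident [DecidableEq E] (hp : G.IsPath u v vs es) {x : V}
    (hx : G.Incident es.toFinset x) : x ∈ vs := by
  obtain ⟨e, he, rfl | rfl⟩ := hx
  exacts [(hp.1.ends_mem e (List.mem_toFinset.1 he)).1,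
    (hp.1.ends_mem e (List.mem_toFinset.1 he)).2]

theorem reflTransGen_adj {S : Set E} (hp : G.IsPath u v vs es) (hS : ∀ e ∈ es, e ∈ S)
    {x : V} (hx : x ∈ vs) : Relation.ReflTransGen (G.Adj S) u x :=
  Relation.ReflTransGen.mono (fun _ _ => Adj.mono hS) _ _ (hp.1.reflTransGen_adj hp.2.2.2.1 hx)

end IsPath

variable [DecidableEq V]

variable (G) in
def endCount (x : V) (e : E) : ℕ :=
  (if (G.ends e).1 = x then 1 else 0) + (if (G.ends e).2 = x then 1 else 0)

theorem endCount_of_ends {e : E} {u w : V} (h : G.ends e = (u, w) ∨ G.ends e = (w, u))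
    (x : V) : G.endCount x e = (if u = x then 1 else 0) + (if w = x then 1 else 0) := by
  rcases h with h | h <;> simp only [endCount, h]
  omega

theorem edgeCount_insert [DecidableEq E] {C : Finset E} {e : E} (he : e ∉ C) (x : V) :
    G.edgeCount (insert e C) x = G.endCount x e + G.edgeCount C x :=
  Finset.sum_insert he

theorem edgeCount_union [DecidableEq E] {C D : Finset E} (hCD : Disjoint C D) (x : V) :
    G.edgeCount (C ∪ D) x = G.edgeCount C x + G.edgeCount D x :=
  Finset.sum_union hCD

theorem edgeCount_toFinset [DecidableEq E] {es : List E} (hes : es.Nodup) (x : V) :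
    G.edgeCount es.toFinset x = (es.map (G.endCount x)).sum :=
  List.sum_toFinset _ hes

theorem IsWalk.sum_endCount (x : V) : ∀ {vs : List V} {es : List E}, G.IsWalk vs es →
    (es.map (G.endCount x)).sum + (if vs.head? = some x then 1 else 0) +
      (if vs.getLast? = some x then 1 else 0) = 2 * vs.count x
  | [w], [], _ => by by_cases hw : w = x <;> simp [hw]
  | u :: w :: vs, e :: es, ⟨he, hwalk⟩ => by
    have ih := hwalk.sum_endCount x
    simp only [List.map_cons, List.sum_cons, List.head?_cons, List.getLast?_cons_cons,
      List.count_cons, Option.some.injEq, beq_iff_eq, endCount_of_ends he x] at ih ⊢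
    split_ifs at ih ⊢ <;> omega

namespace IsPath

variable {u v : V} {vs : List V} {es : List E}

theorem count_le_one (hp : G.IsPath u v vs es) (x : V) : vs.count x ≤ 1 :=
  List.nodup_iff_count_le_one.1 hp.2.1 x

theorem sum_endCount (hp : G.IsPath u v vs es) (x : V) :
    (es.map (G.endCount x)).sum + (if u = x then 1 else 0) + (if v = x then 1 else 0) =
      2 * vs.count x := by
  simpa [hp.2.2.2.1, hp.2.2.2.2] using hp.1.sum_endCount x

end IsPath

theorem isCycle_of_reflTransGen {C : Finset E} (hne : C.Nonempty)
    (hdeg : ∀ x, G.edgeCount C x = 0 ∨ G.edgeCount C x = 2) (u : V)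
    (hreach : ∀ x, G.Incident C x → Relation.ReflTransGen (G.Adj C) u x) : G.IsCycle C :=
  ⟨hne, hdeg, fun x y hx hy => (Std.Symm.symm _ _ (hreach x hx)).trans (hreach y hy)⟩

theorem isCycle_singleton {e : E} {a : V} (he : G.ends e = (a, a)) : G.IsCycle {e} := by
  refine isCycle_of_reflTransGen (Finset.singleton_nonempty e) (fun x => ?_) a fun x hx => ?_
  · by_cases hx : a = x <;> simp [edgeCount, he, hx]
  · obtain ⟨_, he', hx⟩ := hx
    rw [Finset.mem_singleton.1 he', he, or_self] at hx
    exact hx ▸ .refl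

variable [DecidableEq E]

theorem IsPath.isCycle_insert {u v : V} {vs : List V} {es : List E} {e : E}
    (hp : G.IsPath u v vs es) (he : e ∉ es) (hends : G.ends e = (u, v) ∨ G.ends e = (v, u)) :
    G.IsCycle (insert e es.toFinset) := by
  refine isCycle_of_reflTransGen (Finset.insert_nonempty _ _) (fun x => ?_) u fun x hx => ?_
  · have hsum := hp.sum_endCount x
    have hcount := hp.count_le_one x
    rw [edgeCount_insert (by simpa using he), edgeCount_toFinset hp.2.2.1,
      endCount_of_ends hends]
    omega
  · refine hp.reflTransGen_adj (fun e' he' => by simp [he']) ?_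
    rcases incident_insert.1 hx with hx | hx | hx
    · rcases hends with h | h <;> simp only [h] at hx <;> subst hx
      exacts [hp.head_mem, hp.last_mem]
    · rcases hends with h | h <;> simp only [h] at hx <;> subst hx
      exacts [hp.last_mem, hp.head_mem]
    · exact hp.mem_of_incident hx

theorem IsPath.isCycle_union {u v : V} {vs₁ vs₂ : List V} {es₁ es₂ : List E}
    (hp₁ : G.IsPath u v vs₁ es₁) (hp₂ : G.IsPath u v vs₂ es₂) (huv : u ≠ v)
    (hvs : ∀ x ∈ vs₁, x ∈ vs₂ → x = u ∨ x = v) (hes : Disjoint es₁.toFinset es₂.toFinset) :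
    G.IsCycle (es₁.toFinset ∪ es₂.toFinset) := by
  obtain ⟨e, he⟩ := List.exists_mem_of_ne_nil _ (hp₁.edges_ne_nil huv)
  refine isCycle_of_reflTransGen ⟨e, by simp [he]⟩ (fun x => ?_) u fun x hx => ?_
  · have hsum₁ := hp₁.sum_endCount x
    have hsum₂ := hp₂.sum_endCount x
    have hcount₁ := hp₁.count_le_one x
    have hcount₂ := hp₂.count_le_one x
    have hend : u = x ∨ v = x → vs₁.count x = 1 ∧ vs₂.count x = 1 := by
      rintro (rfl | rfl)
      · exact ⟨by have := List.count_pos_iff.2 hp₁.head_mem; omega,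
          by have := List.count_pos_iff.2 hp₂.head_mem; omega⟩
      · exact ⟨by have := List.count_pos_iff.2 hp₁.last_mem; omega,
          by have := List.count_pos_iff.2 hp₂.last_mem; omega⟩
    have hinner : ¬(u = x ∨ v = x) → vs₁.count x = 0 ∨ vs₂.count x = 0 := by
      intro hx
      by_contra! h
      exact hx ((hvs x (List.count_pos_iff.1 (by omega)) (List.count_pos_iff.1 (by omega))).imp
        Eq.symm Eq.symm)
    rw [edgeCount_union hes, edgeCount_toFinset hp₁.2.2.1, edgeCount_toFinset hp₂.2.2.1]
    by_cases hx : u = x ∨ v = x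
    · have := hend hx
      have : ¬(u = x ∧ v = x) := fun ⟨hu, hv⟩ => huv (hu.trans hv.symm)
      split_ifs at hsum₁ hsum₂ <;> first | omega | tauto
    · have := hinner hx
      split_ifs at hsum₁ hsum₂ <;> omega
  · rcases incident_union.1 hx with hx | hx
    · exact hp₁.reflTransGen_adj (fun e' he' => by simp [he']) (hp₁.mem_of_incident hx)
    · exact hp₂.reflTransGen_adj (fun e' he' => by simp [he']) (hp₂.mem_of_incident hx)

theorem ThreeConnected.isCycle_singleton_or_exists_theta (h3 : G.ThreeConnected) (e : E) :
    G.IsCycle {e} ∨ ∃ P Q : Finset E, e ∉ P ∧ e ∉ Q ∧ Disjoint P Q ∧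
      G.IsCycle (insert e P) ∧ G.IsCycle (insert e Q) ∧ G.IsCycle (P ∪ Q) := by
  obtain ⟨a, b, hab⟩ : ∃ a b, G.ends e = (a, b) := ⟨_, _, rfl⟩
  by_cases hloop : a = b
  · exact .inl (isCycle_singleton (hloop ▸ hab))
  obtain ⟨p, hpath, hdisj⟩ := h3 a b hloop
  obtain ⟨i, j, hij, hi, hj⟩ :=
    exists_ne_and_notMem_and_notMem (p := fun i => (p i).2) (fun i j h => (hdisj i j h).2) e
  have hPQ : Disjoint (p i).2.toFinset (p j).2.toFinset := Finset.disjoint_left.2 fun e hi hj =>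
    (hdisj i j hij).2 e (List.mem_toFinset.1 hi) (List.mem_toFinset.1 hj)
  exact .inr ⟨_, _, by simpa using hi, by simpa using hj, hPQ,
    (hpath i).isCycle_insert hi (.inl hab), (hpath j).isCycle_insert hj (.inl hab),
    (hpath i).isCycle_union (hpath j) hloop (hdisj i j hij).1 hPQ⟩

end Multigraph

theorem edge_lengths_determined_by_cycle_lengths_general {V E : Type}
    [DecidableEq V]
    (G : Multigraph V E) (h3 : G.ThreeConnected)
    (L L' : E → ℝ)
    (hcyc : ∀ C : Finset E, G.IsCycle C → ∑ e ∈ C, L e = ∑ e ∈ C, L' e) :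
    L = L' := by
  classical
  funext e
  rcases h3.isCycle_singleton_or_exists_theta e with hloop | ⟨P, Q, heP, heQ, hPQ, hP, hQ, hPQ'⟩
  · simpa using hcyc _ hloop
  have h₁ := hcyc _ hP
  have h₂ := hcyc _ hQ
  have h₃ := hcyc _ hPQ'
  rw [Finset.sum_insert heP, Finset.sum_insert heP] at h₁
  rw [Finset.sum_insert heQ, Finset.sum_insert heQ] at h₂
  rw [Finset.sum_union hPQ, Finset.sum_union hPQ] at h₃
  linarith

/-- For a 3-connected combinatorial graph, the lengths of all cycles determine the
lengths of all edges: two positive length functions assigning the same total length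
to every cycle are equal. -/
theorem edge_lengths_determined_by_cycle_lengths {V E : Type}
    [DecidableEq V] [DecidableEq E]
    (G : Multigraph V E) (h3 : G.ThreeConnected)
    (L L' : E → ℝ) (hL : ∀ e, 0 < L e) (hL' : ∀ e, 0 < L' e)
    (hcyc : ∀ C : Finset E, G.IsCycle C → ∑ e ∈ C, L e = ∑ e ∈ C, L' e) :
    L = L' :=
  edge_lengths_determined_by_cycle_lengths_general G h3 L L' hcyc
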